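/- Let G be a connected linear algebraic group over an algebraically closed field and H a closed subgroup of G, with H acting on G by right translations. Then for each rational character ω of H and each g ∈ G, there exists an H-invariant open neighbourhood U of g in G such that the space 𝒪_ω(U) of regular functions f on U satisfying f(xh) = ω(h)f(x) for all h ∈ H, x ∈ U, is nonzero. -/

import Mathlib

open Matrix MvPolynomial Pointwise

noncomputable section

namespace AlgGrp

variable {E : Type*} [Field E] {n : ℕ}

/-! ### The Zariski topology on `GL n E`

We realise `GL n E` as a closed subvariety of affine `n² + 1`-space via the matrix
entries together with the inverse of the determinant, and endow it with the Zariski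
topology generated by the basic open sets of polynomials in these coordinates. -/

/-- The affine coordinates of an element of `GL n E`: matrix entries and `det⁻¹`. -/
def glCoordFun (g : GL (Fin n) E) : (Fin n × Fin n) ⊕ Unit → E :=
  Sum.elim (fun ij => (g : Matrix (Fin n) (Fin n) E) ij.1 ij.2)
    fun _ => Ring.inverse ((g : Matrix (Fin n) (Fin n) E).det)

/-- Evaluation of a polynomial in the natural coordinates of `GL n E`. -/
def glEval (p : MvPolynomial ((Fin n × Fin n) ⊕ Unit) E) (g : GL (Fin n) E) : E :=
  MvPolynomial.eval (glCoordFun g) p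

/-- The Zariski topology on `GL n E`. -/
instance glZariski : TopologicalSpace (GL (Fin n) E) :=
  TopologicalSpace.generateFrom
    {U | ∃ p : MvPolynomial ((Fin n × Fin n) ⊕ Unit) E, U = {g | glEval p g ≠ 0}}

/-! ### Linear algebraic groups as Zariski-closed subgroups of `GL n E` -/

/-- A subgroup of `GL n E` is an algebraic (i.e. closed) subgroup if its carrier is
Zariski-closed. -/
def IsClosedSubgroup (H : Subgroup (GL (Fin n) E)) : Prop :=
  IsClosed (H : Set (GL (Fin n) E))

/-- A connected linear algebraic group, realised as a Zariski-closed connected subgroup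
of some `GL n E`. -/
def IsConnectedLinearAlgGrp (G : Subgroup (GL (Fin n) E)) : Prop :=
  IsClosedSubgroup G ∧ IsConnected (G : Set (GL (Fin n) E))

/-- An element of `GL n E` is unipotent if `g - 1` is nilpotent. -/
def IsUnipotentElt (g : GL (Fin n) E) : Prop :=
  ((g : Matrix (Fin n) (Fin n) E) - 1) ^ n = 0

/-- An element of `GL n E` is semisimple if it is diagonalisable (the field being
algebraically closed). -/
def IsSemisimpleElt (g : GL (Fin n) E) : Prop :=
  ∃ (u : GL (Fin n) E) (d : Fin n → E),
    (g : Matrix (Fin n) (Fin n) E) =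
      (u : Matrix (Fin n) (Fin n) E) * Matrix.diagonal d *
        ((u⁻¹ : GL (Fin n) E) : Matrix (Fin n) (Fin n) E)

/-- `H` is normalised by `G`. -/
def IsNormalIn (G H : Subgroup (GL (Fin n) E)) : Prop :=
  ∀ g ∈ G, ∀ h ∈ H, g * h * g⁻¹ ∈ H

/-- A subgroup all of whose elements are unipotent. -/
def IsUnipotentSubgroup (H : Subgroup (GL (Fin n) E)) : Prop :=
  ∀ h ∈ H, IsUnipotentElt h

/-- A linear algebraic group is reductive if its unipotent radical is trivial, i.e.
every closed connected normal subgroup consisting of unipotent elements is trivial. -/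
def IsReductive (G : Subgroup (GL (Fin n) E)) : Prop :=
  ∀ H : Subgroup (GL (Fin n) E), H ≤ G → IsClosedSubgroup H →
    IsConnected (H : Set (GL (Fin n) E)) → IsNormalIn G H → IsUnipotentSubgroup H → H = ⊥

/-- A Borel subgroup of `G`: a maximal closed connected solvable subgroup. -/
def IsBorelIn (G B : Subgroup (GL (Fin n) E)) : Prop :=
  B ≤ G ∧ IsClosedSubgroup B ∧ IsConnected (B : Set (GL (Fin n) E)) ∧ IsSolvable B ∧
    ∀ B' : Subgroup (GL (Fin n) E), B' ≤ G → IsClosedSubgroup B' →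
      IsConnected (B' : Set (GL (Fin n) E)) → IsSolvable B' → B ≤ B' → B' = B

/-- A parabolic subgroup of `G`: a closed subgroup containing a Borel subgroup of `G`. -/
def IsParabolicIn (G P : Subgroup (GL (Fin n) E)) : Prop :=
  P ≤ G ∧ IsClosedSubgroup P ∧ ∃ B, IsBorelIn G B ∧ B ≤ P

/-- `N` is the unipotent radical of `P`: the largest closed connected normal subgroup of
`P` consisting of unipotent elements. -/
def IsUnipotentRadicalOf (P N : Subgroup (GL (Fin n) E)) : Prop :=
  N ≤ P ∧ IsClosedSubgroup N ∧ IsConnected (N : Set (GL (Fin n) E)) ∧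
    IsUnipotentSubgroup N ∧ IsNormalIn P N ∧
    ∀ N' : Subgroup (GL (Fin n) E), N' ≤ P → IsClosedSubgroup N' →
      IsConnected (N' : Set (GL (Fin n) E)) → IsUnipotentSubgroup N' → IsNormalIn P N' → N' ≤ N

/-- `M` is a Levi component of a parabolic subgroup `P` with unipotent radical `N`:
a closed connected complement to `N` in `P`. -/
def IsLeviComponentOf (P N M : Subgroup (GL (Fin n) E)) : Prop :=
  M ≤ P ∧ IsClosedSubgroup M ∧ IsConnected (M : Set (GL (Fin n) E)) ∧
    M ⊓ N = ⊥ ∧ ∀ p ∈ P, ∃ m ∈ M, ∃ u ∈ N, p = m * u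

/-- `C` is a conjugacy class of the subgroup `H`. -/
def IsConjClassIn (H : Subgroup (GL (Fin n) E)) (C : Set (GL (Fin n) E)) : Prop :=
  ∃ μ ∈ H, C = {x | ∃ h ∈ H, x = h * μ * h⁻¹}

/-- `tC` is the conjugacy class of `G` induced from the conjugacy class `C` of a Levi
component via a parabolic subgroup with unipotent radical `N`: the conjugacy class of `G`
whose intersection with `C * N` is open and dense in `C * N`. -/
def IsInducedClassVia (G N : Subgroup (GL (Fin n) E)) (C tC : Set (GL (Fin n) E)) : Prop :=
  IsConjClassIn G tC ∧
    (∃ U : Set (GL (Fin n) E), IsOpen U ∧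
      tC ∩ (C * (N : Set (GL (Fin n) E))) = U ∩ (C * (N : Set (GL (Fin n) E)))) ∧
    C * (N : Set (GL (Fin n) E)) ⊆ closure (tC ∩ (C * (N : Set (GL (Fin n) E))))

/-! ### The Lie algebra of a closed subgroup of `GL n E`

The Lie algebra is the tangent space at the identity, computed via dual numbers: a matrix
`X` is in the Lie algebra iff `1 + ε X` annihilates every polynomial of the vanishing
ideal of the subgroup. -/

/-- The dual-number point `1 + ε X` of the coordinate space of `GL n E`. -/
def dualPt (X : Matrix (Fin n) (Fin n) E) : (Fin n × Fin n) ⊕ Unit → DualNumber E :=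
  Sum.elim
    (fun ij => algebraMap E (DualNumber E) ((1 : Matrix (Fin n) (Fin n) E) ij.1 ij.2) +
      X ij.1 ij.2 • DualNumber.eps)
    fun _ => 1 - X.trace • DualNumber.eps

/-- The Lie algebra of a closed subgroup of `GL n E` (the tangent space at `1`). -/
def lieAlgOf (H : Subgroup (GL (Fin n) E)) : Set (Matrix (Fin n) (Fin n) E) :=
  {X | ∀ p : MvPolynomial ((Fin n × Fin n) ⊕ Unit) E, (∀ g ∈ H, glEval p g = 0) →
    MvPolynomial.eval (dualPt X) (MvPolynomial.map (algebraMap E (DualNumber E)) p) = 0}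

/-- The set `P^infl` of elements `δ` of `P` with `𝔫 ⊆ (id - Ad δ) 𝔭`. -/
def inflSet (P N : Subgroup (GL (Fin n) E)) : Set (GL (Fin n) E) :=
  {δ | δ ∈ P ∧ ∀ X ∈ lieAlgOf N, ∃ Z ∈ lieAlgOf P,
    X = Z - (δ : Matrix (Fin n) (Fin n) E) * Z *
      ((δ⁻¹ : GL (Fin n) E) : Matrix (Fin n) (Fin n) E)}

/-! ### Regular functions and rational characters -/

/-- A function on a subset `S` of `GL n E` is regular if it is locally a quotient of
polynomial functions in the coordinates of `GL n E`. -/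
def IsRegularOnGL (S : Set (GL (Fin n) E)) (f : GL (Fin n) E → E) : Prop :=
  ∀ g ∈ S, ∃ p q : MvPolynomial ((Fin n × Fin n) ⊕ Unit) E, glEval q g ≠ 0 ∧
    ∀ h ∈ S, glEval q h ≠ 0 → f h * glEval q h = glEval p h

/-- A rational character of a (carrier of a) subgroup of `GL n E`: a multiplicative
function given by a polynomial in the coordinates. -/
def IsRatCharOn (S : Set (GL (Fin n) E)) (χ : GL (Fin n) E → E) : Prop :=
  (∃ p : MvPolynomial ((Fin n × Fin n) ⊕ Unit) E, ∀ g ∈ S, χ g = glEval p g) ∧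
    χ 1 = 1 ∧ ∀ g ∈ S, ∀ h ∈ S, χ (g * h) = χ g * χ h

/-- The restriction map `X(G) → X(H)` on rational characters is an isomorphism:
it is injective and surjective. -/
def CharResIso (Gs Hs : Set (GL (Fin n) E)) : Prop :=
  (∀ χ₁ χ₂ : GL (Fin n) E → E, IsRatCharOn Gs χ₁ → IsRatCharOn Gs χ₂ →
    (∀ h ∈ Hs, χ₁ h = χ₂ h) → ∀ g ∈ Gs, χ₁ g = χ₂ g) ∧
  ∀ ω : GL (Fin n) E → E, IsRatCharOn Hs ω →
    ∃ χ : GL (Fin n) E → E, IsRatCharOn Gs χ ∧ ∀ h ∈ Hs, χ h = ω h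

/-! ### Affine space with its Zariski topology -/

instance affZariski {m : ℕ} : TopologicalSpace (Fin m → E) :=
  TopologicalSpace.generateFrom
    {U | ∃ p : MvPolynomial (Fin m) E, U = {x | MvPolynomial.eval x p ≠ 0}}

/-- A regular function on a subset of affine space: locally a quotient of polynomials. -/
def IsRegularOnAff {m : ℕ} (S : Set (Fin m → E)) (f : (Fin m → E) → E) : Prop :=
  ∀ x ∈ S, ∃ p q : MvPolynomial (Fin m) E, MvPolynomial.eval x q ≠ 0 ∧
    ∀ y ∈ S, MvPolynomial.eval y q ≠ 0 → f y * MvPolynomial.eval y q = MvPolynomial.eval y p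

/-- A quasi-affine variety: a locally closed subset of affine space. -/
def IsQuasiAffine {m : ℕ} (V : Set (Fin m → E)) : Prop :=
  ∃ Z U : Set (Fin m → E), IsClosed Z ∧ IsOpen U ∧ V = Z ∩ U

/-! ### Diagonalisable groups (as closed subgroups of a torus) -/

/-- Affine coordinates on the torus `(Eˣ)^k`: the entries and their inverses. -/
def torCoord {k : ℕ} (d : Fin k → Eˣ) : Fin k ⊕ Fin k → E :=
  Sum.elim (fun i => ((d i : Eˣ) : E)) fun i => (((d i)⁻¹ : Eˣ) : E)

def torEval {k : ℕ} (p : MvPolynomial (Fin k ⊕ Fin k) E) (d : Fin k → Eˣ) : E :=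
  MvPolynomial.eval (torCoord d) p

instance torZariski {k : ℕ} : TopologicalSpace (Fin k → Eˣ) :=
  TopologicalSpace.generateFrom
    {U | ∃ p : MvPolynomial (Fin k ⊕ Fin k) E, U = {d | torEval p d ≠ 0}}

/-- A rational character of a closed subgroup `D` of the torus. -/
def IsRatCharTor {k : ℕ} (D : Subgroup (Fin k → Eˣ)) (ω : (Fin k → Eˣ) → E) : Prop :=
  (∃ p : MvPolynomial (Fin k ⊕ Fin k) E, ∀ d ∈ D, ω d = torEval p d) ∧
    ω 1 = 1 ∧ ∀ d ∈ D, ∀ e ∈ D, ω (d * e) = ω d * ω e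

/-- Coordinates of a point of `V × D`. -/
def torActCoord {m k : ℕ} (x : Fin m → E) (d : Fin k → Eˣ) : Fin m ⊕ (Fin k ⊕ Fin k) → E :=
  Sum.elim x (torCoord d)

/-- A regular (right) action of a subgroup `D` of the torus on a subset `V` of affine
space: the action map is regular in the joint coordinates. -/
def IsRegularTorAction {m k : ℕ} (V : Set (Fin m → E)) (D : Subgroup (Fin k → Eˣ))
    (a : (Fin m → E) → (Fin k → Eˣ) → (Fin m → E)) : Prop :=
  (∀ x ∈ V, ∀ d ∈ D, a x d ∈ V) ∧ (∀ x ∈ V, a x 1 = x) ∧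
    (∀ x ∈ V, ∀ d ∈ D, ∀ e ∈ D, a (a x d) e = a x (d * e)) ∧
    ∀ j : Fin m, ∀ x ∈ V, ∀ d ∈ D, ∃ p q : MvPolynomial (Fin m ⊕ (Fin k ⊕ Fin k)) E,
      MvPolynomial.eval (torActCoord x d) q ≠ 0 ∧
      ∀ y ∈ V, ∀ e ∈ D, MvPolynomial.eval (torActCoord y e) q ≠ 0 →
        a y e j * MvPolynomial.eval (torActCoord y e) q = MvPolynomial.eval (torActCoord y e) p

/-- The action is free and separable.  Over an algebraically closed field this is
equivalent to each orbit map being an isomorphism of varieties onto the orbit (orbit maps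
are bijective onto orbits by freeness, birational by separability, and isomorphisms by
Zariski's main theorem, orbits being normal); we use the latter formulation. -/
def IsFreeSeparableTorAction {m k : ℕ} (V : Set (Fin m → E)) (D : Subgroup (Fin k → Eˣ))
    (a : (Fin m → E) → (Fin k → Eˣ) → (Fin m → E)) : Prop :=
  ∀ ξ ∈ V, (∀ d ∈ D, ∀ e ∈ D, a ξ d = a ξ e → d = e) ∧
    ∃ r : (Fin m → E) → (Fin k → Eˣ), (∀ d ∈ D, r (a ξ d) = d) ∧
      ∀ i : Fin k, IsRegularOnAff {y | ∃ d ∈ D, y = a ξ d} (fun y => ((r y i : Eˣ) : E)) ∧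
        IsRegularOnAff {y | ∃ d ∈ D, y = a ξ d} fun y => (((r y i)⁻¹ : Eˣ) : E)

/-! ### Regular actions of linear algebraic groups on quasi-affine varieties -/

/-- Coordinates of a point of `G × V`. -/
def glActCoord {m : ℕ} (g : GL (Fin n) E) (x : Fin m → E) :
    ((Fin n × Fin n) ⊕ Unit) ⊕ Fin m → E :=
  Sum.elim (glCoordFun g) x

/-- A regular action of the subgroup `G` of `GL n E` on the subset `V` of affine space. -/
def IsRegularGLActionOn {m : ℕ} (V : Set (Fin m → E)) (G : Subgroup (GL (Fin n) E))
    (a : GL (Fin n) E → (Fin m → E) → (Fin m → E)) : Prop :=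
  (∀ g ∈ G, ∀ x ∈ V, a g x ∈ V) ∧ (∀ x ∈ V, a 1 x = x) ∧
    (∀ g ∈ G, ∀ h ∈ G, ∀ x ∈ V, a (g * h) x = a g (a h x)) ∧
    ∀ j : Fin m, ∀ g ∈ G, ∀ x ∈ V, ∃ p q : MvPolynomial (((Fin n × Fin n) ⊕ Unit) ⊕ Fin m) E,
      MvPolynomial.eval (glActCoord g x) q ≠ 0 ∧
      ∀ h ∈ G, ∀ y ∈ V, MvPolynomial.eval (glActCoord h y) q ≠ 0 →
        a h y j * MvPolynomial.eval (glActCoord h y) q = MvPolynomial.eval (glActCoord h y) p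

/-- Orbit of a point under a set of group elements. -/
def orbitSet {m : ℕ} (Gs : Set (GL (Fin n) E))
    (a : GL (Fin n) E → (Fin m → E) → (Fin m → E)) (x : Fin m → E) : Set (Fin m → E) :=
  {y | ∃ g ∈ Gs, y = a g x}

/-- Stabiliser (as a set) of a point. -/
def stabSet {m : ℕ} (Gs : Set (GL (Fin n) E))
    (a : GL (Fin n) E → (Fin m → E) → (Fin m → E)) (x : Fin m → E) : Set (GL (Fin n) E) :=
  {g ∈ Gs | a g x = x}

/-- The set of generic points: points whose orbit is dense in `V`. -/
def genPts {m : ℕ} (V : Set (Fin m → E)) (Gs : Set (GL (Fin n) E))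
    (a : GL (Fin n) E → (Fin m → E) → (Fin m → E)) : Set (Fin m → E) :=
  {x ∈ V | V ⊆ closure (orbitSet Gs a x)}

/-- `V` is prehomogeneous: it contains a dense (relatively open) orbit. -/
def IsPrehomOn {m : ℕ} (V : Set (Fin m → E)) (Gs : Set (GL (Fin n) E))
    (a : GL (Fin n) E → (Fin m → E) → (Fin m → E)) : Prop :=
  ∃ ξ ∈ V, V ⊆ closure (orbitSet Gs a ξ) ∧
    ∃ U : Set (Fin m → E), IsOpen U ∧ orbitSet Gs a ξ = U ∩ V


/-! ### Matrix Lie algebra material -/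

/-- The Zariski topology on the space of `n × n` matrices (not registered as an
instance). -/
def matZariskiT : TopologicalSpace (Matrix (Fin n) (Fin n) E) :=
  TopologicalSpace.generateFrom
    {U | ∃ p : MvPolynomial (Fin n × Fin n) E,
      U = {A : Matrix (Fin n) (Fin n) E | MvPolynomial.eval (fun ij => A ij.1 ij.2) p ≠ 0}}

/-- An `sl₂`-triple `(X, H, Y)` inside a Lie subalgebra `g` of matrices. -/
def IsSl2Triple (g : Set (Matrix (Fin n) (Fin n) E)) (X H Y : Matrix (Fin n) (Fin n) E) :
    Prop :=
  X ∈ g ∧ H ∈ g ∧ Y ∈ g ∧ H * X - X * H = (2 : E) • X ∧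
    H * Y - Y * H = (-2 : E) • Y ∧ X * Y - Y * X = H

/-- The eigenspace of `ad H` on `g` with (integer) eigenvalue `k`. -/
def adEig (g : Set (Matrix (Fin n) (Fin n) E)) (Hm : Matrix (Fin n) (Fin n) E) (k : ℤ) :
    Set (Matrix (Fin n) (Fin n) E) :=
  {Z ∈ g | Hm * Z - Z * Hm = ((k : E)) • Z}

/-- `𝔮 = ⊕_{k ≥ 0} 𝔤_k`. -/
def qOf (g : Set (Matrix (Fin n) (Fin n) E)) (Hm : Matrix (Fin n) (Fin n) E) :
    Set (Matrix (Fin n) (Fin n) E) :=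
  (Submodule.span E (⋃ k : ℕ, adEig g Hm (k : ℤ)) : Submodule E (Matrix (Fin n) (Fin n) E))

/-- `𝔲 = ⊕_{k ≥ 2} 𝔤_k`. -/
def uOf (g : Set (Matrix (Fin n) (Fin n) E)) (Hm : Matrix (Fin n) (Fin n) E) :
    Set (Matrix (Fin n) (Fin n) E) :=
  (Submodule.span E (⋃ k : ℕ, adEig g Hm ((k : ℤ) + 2)) :
    Submodule E (Matrix (Fin n) (Fin n) E))

/-- `𝔲' = ⊕_{k > 2} 𝔤_k`. -/
def u'Of (g : Set (Matrix (Fin n) (Fin n) E)) (Hm : Matrix (Fin n) (Fin n) E) :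
    Set (Matrix (Fin n) (Fin n) E) :=
  (Submodule.span E (⋃ k : ℕ, adEig g Hm ((k : ℤ) + 3)) :
    Submodule E (Matrix (Fin n) (Fin n) E))

/-- The exponential of a nilpotent matrix (a finite sum in characteristic zero). -/
def expNil (X : Matrix (Fin n) (Fin n) E) : Matrix (Fin n) (Fin n) E :=
  ∑ k ∈ Finset.range (n + 1), ((k.factorial : E)⁻¹) • X ^ k

/-- `ad A = [A, ·]` as a linear endomorphism of the matrix space. -/
def adM (A : Matrix (Fin n) (Fin n) E) :
    Matrix (Fin n) (Fin n) E →ₗ[E] Matrix (Fin n) (Fin n) E :=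
  LinearMap.mulLeft E A - LinearMap.mulRight E A

/-- Conjugation `Z ↦ l Z l⁻¹` as a linear endomorphism of the matrix space. -/
def conjLin (l : GL (Fin n) E) :
    Matrix (Fin n) (Fin n) E →ₗ[E] Matrix (Fin n) (Fin n) E :=
  (LinearMap.mulLeft E ((l : Matrix (Fin n) (Fin n) E))).comp
    (LinearMap.mulRight E (((l⁻¹ : GL (Fin n) E) : Matrix (Fin n) (Fin n) E)))

/-- Evaluation of a polynomial in the matrix entries. -/
def matEval (p : MvPolynomial (Fin n × Fin n) E) (A : Matrix (Fin n) (Fin n) E) : E :=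
  MvPolynomial.eval (fun ij => A ij.1 ij.2) p

/-- Directional derivative `∂_B p (A)` of a polynomial function of a matrix. -/
def dirDeriv (p : MvPolynomial (Fin n × Fin n) E) (A B : Matrix (Fin n) (Fin n) E) : E :=
  ∑ ij : Fin n × Fin n, B ij.1 ij.2 * matEval (MvPolynomial.pderiv ij p) A

/-! Extend `ω` to a polynomial function `f` on `GL n`. The right `H`-translates of `f` span a
finite-dimensional space `W` of polynomial functions, and on `W` the functions vanishing at `1`
(equivalently, on `H`) form an `H`-stable hyperplane `M`, with `H` acting on `W ⧸ M` by `ω`.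
For a finite-dimensional space of functions with basis `(vᵢ)`, stable under right translation by
`h`, the function `x ↦ det (vᵢ (z_a x))` gets multiplied by the determinant of `h` acting on the
space when `x` is replaced by `x h`, and the points `z_a` can be chosen to make it nonzero at `g`.
The quotient of these determinants for `W` and for `M` is then a regular `ω`-eigenfunction on the
`H`-stable open set where the denominator does not vanish. -/

section TranslationDeterminants

variable {Γ : Type*} [Group Γ]

def rightTranslate (h : Γ) : (Γ → E) →ₗ[E] (Γ → E) :=
  LinearMap.funLeft E E (· * h)

@[simp]
lemma rightTranslate_apply (h : Γ) (f : Γ → E) (x : Γ) : rightTranslate h f x = f (x * h) :=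
  rfl

variable {ι : Type*} [Fintype ι] [DecidableEq ι]

def translateDet (v : ι → Γ → E) (z : ι → Γ) (x : Γ) : E :=
  (Matrix.of fun a i => v i (z a * x)).det

lemma span_range_swap_eq_top_of_linearIndependent {X : Type*} (v : ι → X → E)
    (hv : LinearIndependent E v) : Submodule.span E (Set.range fun x i => v i x) = ⊤ := by
  by_contra hne
  obtain ⟨φ, hφ, hker⟩ :=
    Submodule.exists_dual_map_eq_bot_of_lt_top (lt_top_iff_ne_top.mpr hne) inferInstance
  have hvanish : ∀ x, φ (fun i => v i x) = 0 := fun x => by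
    simpa [hker] using Submodule.mem_map_of_mem (f := φ)
      (Submodule.subset_span (s := Set.range fun x i => v i x) ⟨x, rfl⟩)
  have hrel : ∑ i, φ (Pi.single i 1) • v i = 0 := by
    funext x
    simp only [Finset.sum_apply, Pi.smul_apply, smul_eq_mul, Pi.zero_apply]
    rw [← hvanish x, φ.pi_apply_eq_sum_univ]
    refine Finset.sum_congr rfl fun i _ => ?_
    rw [mul_comm]
    congr 2
    ext j
    simp [Pi.single_apply, eq_comm]
  refine hφ (LinearMap.pi_ext' fun i => LinearMap.ext_ring ?_)
  simpa using Fintype.linearIndependent_iff.mp hv _ hrel i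

lemma exists_det_ne_zero_of_linearIndependent {X : Type*} (v : ι → X → E)
    (hv : LinearIndependent E v) : ∃ z : ι → X, (Matrix.of fun a i => v i (z a)).det ≠ 0 := by
  have hspan := span_range_swap_eq_top_of_linearIndependent v hv
  let B₀ := Module.Basis.ofSpan hspan.ge
  let B := B₀.reindex (B₀.indexEquiv (Pi.basisFun E ι))
  have hB : ∀ a, B a ∈ Set.range fun x i => v i x := fun a => by
    rw [Module.Basis.reindex_apply]
    exact Module.Basis.ofSpan_subset hspan.ge (Set.mem_range_self _)
  choose z hz using hB
  refine ⟨z, ?_⟩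
  have hrows : (Matrix.of fun a i => v i (z a)) = Matrix.of fun a => B a := by
    ext a i
    simp [← hz a]
  rw [hrows, ← isUnit_iff_ne_zero, ← Matrix.isUnit_iff_isUnit_det]
  exact Matrix.linearIndependent_rows_iff_isUnit.mp B.linearIndependent

lemma exists_translateDet_ne_zero (v : ι → Γ → E) (hv : LinearIndependent E v) (g : Γ) :
    ∃ z, translateDet v z g ≠ 0 := by
  obtain ⟨z, hz⟩ := exists_det_ne_zero_of_linearIndependent v hv
  exact ⟨fun a => z a * g⁻¹, by simpa [translateDet] using hz⟩

lemma translateDet_mul_right {V : Type*} [AddCommGroup V] [Module E V] (b : Module.Basis ι E V)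
    (j : V →ₗ[E] Γ → E) (T : V →ₗ[E] V) (h : Γ) (hT : j ∘ₗ T = rightTranslate h ∘ₗ j)
    (z : ι → Γ) (x : Γ) :
    translateDet (fun i => j (b i)) z (x * h) =
      translateDet (fun i => j (b i)) z x * LinearMap.det T := by
  rw [← LinearMap.det_toMatrix b, translateDet, translateDet, ← Matrix.det_mul]
  congr 1
  ext a i
  have hTb : j (T (b i)) = ∑ k, LinearMap.toMatrix b b T k i • j (b k) := by
    conv_lhs => rw [← b.sum_repr (T (b i)), map_sum]
    simp only [map_smul, LinearMap.toMatrix_apply]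
  have := congrFun (LinearMap.congr_fun hT (b i)) (z a * x)
  simp only [LinearMap.comp_apply, rightTranslate_apply, hTb, Finset.sum_apply, Pi.smul_apply,
    smul_eq_mul] at this
  simp only [Matrix.of_apply, Matrix.mul_apply, ← mul_assoc, ← this, mul_comm]

lemma translateDet_mem (A : Subalgebra E (Γ → E)) (hA : ∀ f ∈ A, ∀ y, (fun x => f (y * x)) ∈ A)
    {v : ι → Γ → E} (hv : ∀ i, v i ∈ A) (z : ι → Γ) : translateDet v z ∈ A := by
  let M : Matrix ι ι A := Matrix.of fun a i => ⟨_, hA _ (hv i) (z a)⟩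
  have : translateDet v z = A.val M.det := by
    funext x
    rw [A.val.map_det]
    exact (RingHom.map_det (Pi.evalRingHom (fun _ : Γ => E) x) (A.val.mapMatrix M)).symm
  exact this ▸ SetLike.coe_mem _

end TranslationDeterminants

section SemiInvariants

variable {Γ : Type*} [Group Γ] (H : Subgroup Γ)

def rightTranslatesSpan (f : Γ → E) : Submodule E (Γ → E) :=
  Submodule.span E (Set.range fun h : H => rightTranslate (h : Γ) f)

variable {H}

lemma self_mem_rightTranslatesSpan (f : Γ → E) : f ∈ rightTranslatesSpan H f :=
  Submodule.subset_span ⟨1, by ext; simp⟩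

lemma rightTranslate_mem_rightTranslatesSpan {f v : Γ → E} {h : Γ} (hh : h ∈ H)
    (hv : v ∈ rightTranslatesSpan H f) : rightTranslate h v ∈ rightTranslatesSpan H f := by
  have : rightTranslatesSpan H f ≤ (rightTranslatesSpan H f).comap (rightTranslate h) := by
    refine Submodule.span_le.2 ?_
    rintro _ ⟨k, rfl⟩
    exact Submodule.subset_span ⟨⟨h * k, H.mul_mem hh k.2⟩, by ext x; simp [mul_assoc]⟩
  exact this hv

lemma apply_eq_apply_one_mul_of_mem_rightTranslatesSpan {ω f v : Γ → E}
    (hωmul : ∀ y ∈ H, ∀ h ∈ H, ω (y * h) = ω y * ω h) (hf : ∀ y ∈ H, f y = ω y)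
    (hv : v ∈ rightTranslatesSpan H f) {y : Γ} (hy : y ∈ H) : v y = v 1 * ω y := by
  induction hv using Submodule.span_induction with
  | mem _ hv =>
    obtain ⟨k, rfl⟩ := hv
    simp [hf _ (H.mul_mem hy k.2), hf _ k.2, hωmul _ hy _ k.2, mul_comm]
  | zero => simp
  | add _ _ _ _ h₁ h₂ => simp [h₁, h₂, add_mul]
  | smul _ _ _ h => simp [h, mul_assoc]

def rightTranslateOn {h : Γ} (hh : h ∈ H) (f : Γ → E) :
    rightTranslatesSpan H f →ₗ[E] rightTranslatesSpan H f :=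
  (rightTranslate h).restrict fun _ => rightTranslate_mem_rightTranslatesSpan hh

variable (H) in
def vanishingAtOne (f : Γ → E) : Submodule E (rightTranslatesSpan H f) :=
  LinearMap.ker ((LinearMap.proj 1).comp (rightTranslatesSpan H f).subtype)

lemma vanishingAtOne_le_comap {ω f : Γ → E} (hωmul : ∀ y ∈ H, ∀ h ∈ H, ω (y * h) = ω y * ω h)
    (hf : ∀ y ∈ H, f y = ω y) {h : Γ} (hh : h ∈ H) :
    vanishingAtOne H f ≤ (vanishingAtOne H f).comap (rightTranslateOn hh f) := by
  intro v hv
  simp only [vanishingAtOne, Submodule.mem_comap, LinearMap.mem_ker] at hv ⊢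
  simp_all [rightTranslateOn,
    apply_eq_apply_one_mul_of_mem_rightTranslatesSpan hωmul hf v.2 hh]

-- Instance search and unification get lost on submodules of submodules: hence the explicit
-- `(M := _)`, `Module.Free.of_divisionRing` and `Basis.ofVectorSpace` here and below.
lemma det_rightTranslateOn {ω f : Γ → E} (hω1 : ω 1 = 1)
    (hωmul : ∀ y ∈ H, ∀ h ∈ H, ω (y * h) = ω y * ω h) (hf : ∀ y ∈ H, f y = ω y)
    [FiniteDimensional E (rightTranslatesSpan H f)] {h : Γ} (hh : h ∈ H) :
    LinearMap.det (rightTranslateOn hh f) =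
      LinearMap.det (M := vanishingAtOne H f)
        ((rightTranslateOn hh f).restrict (vanishingAtOne_le_comap hωmul hf hh)) * ω h := by
  set W := rightTranslatesSpan H f
  set M := vanishingAtOne H f
  have hquot : M.mapQ M (rightTranslateOn hh f) (vanishingAtOne_le_comap hωmul hf hh) =
      ω h • LinearMap.id := by
    refine Submodule.linearMap_qext _ (LinearMap.ext fun v => ?_)
    simp only [LinearMap.comp_apply, Submodule.mkQ_apply, Submodule.mapQ_apply,
      LinearMap.smul_apply, LinearMap.id_apply, ← Submodule.Quotient.mk_smul,
      Submodule.Quotient.eq]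
    simp [M, vanishingAtOne, rightTranslateOn,
      apply_eq_apply_one_mul_of_mem_rightTranslatesSpan hωmul hf v.2 hh, mul_comm]
  have hsurj : Function.Surjective ((LinearMap.proj 1).comp W.subtype : W →ₗ[E] E) := fun c =>
    ⟨c • ⟨f, self_mem_rightTranslatesSpan f⟩, by simp [hf 1 H.one_mem, hω1]⟩
  have hrank : Module.finrank E (W ⧸ M) = 1 :=
    (LinearMap.quotKerEquivOfSurjective _ hsurj).finrank_eq.trans (Module.finrank_self E)
  have : Module.Free E M := Module.Free.of_divisionRing E M
  rw [LinearMap.det_eq_det_mul_det M _ (vanishingAtOne_le_comap hωmul hf hh), hquot,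
    LinearMap.det_smul, LinearMap.det_id, hrank, pow_one, mul_one]

theorem exists_translateDet_semiInvariant_pair (A : Subalgebra E (Γ → E))
    (hA : ∀ f ∈ A, ∀ y, (fun x => f (y * x)) ∈ A) {ω f : Γ → E} (hω1 : ω 1 = 1)
    (hωmul : ∀ y ∈ H, ∀ h ∈ H, ω (y * h) = ω y * ω h) (hf : ∀ y ∈ H, f y = ω y)
    (hfA : rightTranslatesSpan H f ≤ Subalgebra.toSubmodule A)
    [FiniteDimensional E (rightTranslatesSpan H f)] (g : Γ) :
    ∃ P ∈ A, ∃ Q ∈ A, P g ≠ 0 ∧ Q g ≠ 0 ∧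
      ∀ h ∈ H, ∃ c : E, c ≠ 0 ∧ ∀ x, Q (x * h) = Q x * c ∧ P (x * h) = P x * (c * ω h) := by
  classical
  set W := rightTranslatesSpan H f
  set M := vanishingAtOne H f
  let bW := Module.Basis.ofVectorSpace E W
  let bM := Module.Basis.ofVectorSpace E M
  let jM : M →ₗ[E] Γ → E := W.subtype ∘ₗ M.subtype
  have hjM : LinearMap.ker jM = ⊥ := by
    rw [LinearMap.ker_comp, W.ker_subtype, Submodule.comap_bot, M.ker_subtype]
  obtain ⟨zW, hzW⟩ :=
    exists_translateDet_ne_zero _ (bW.linearIndependent.map' W.subtype W.ker_subtype) g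
  obtain ⟨zM, hzM⟩ := exists_translateDet_ne_zero _ (bM.linearIndependent.map' jM hjM) g
  refine ⟨_, translateDet_mem A hA (fun i => hfA (bW i).2) zW,
    _, translateDet_mem A hA (fun i => hfA (bM i : W).2) zM, hzW, hzM, fun h hh => ?_⟩
  let TM : M →ₗ[E] M := (rightTranslateOn hh f).restrict (vanishingAtOne_le_comap hωmul hf hh)
  have hinj : Function.Injective TM := fun u v huv => by
    ext x
    have : ((u : W) : Γ → E) (x * h⁻¹ * h) = ((v : W) : Γ → E) (x * h⁻¹ * h) :=
      congrFun (congrArg jM huv) (x * h⁻¹)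
    simpa using this
  have hTM : IsUnit TM :=
    (LinearMap.isUnit_iff_ker_eq_bot (V := M) TM).2 (LinearMap.ker_eq_bot.2 hinj)
  refine ⟨LinearMap.det (M := M) TM, (LinearMap.isUnit_det (M := M) TM hTM).ne_zero,
    fun x => ⟨?_, ?_⟩⟩
  · have hcomm : jM ∘ₗ TM = rightTranslate h ∘ₗ jM := rfl
    exact translateDet_mul_right (V := M) bM jM TM h hcomm zM x
  · rw [← det_rightTranslateOn hω1 hωmul hf hh]
    exact translateDet_mul_right bW W.subtype _ h rfl zW x

end SemiInvariants

section PolynomialFunctions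

def glPolyFun : Subalgebra E (GL (Fin n) E → E) :=
  (MvPolynomial.aeval fun i (x : GL (Fin n) E) => glCoordFun x i).range

lemma mem_glPolyFun_iff {F : GL (Fin n) E → E} :
    F ∈ glPolyFun ↔ ∃ p, (fun x => glEval p x) = F := by
  have key : ∀ p, MvPolynomial.aeval (fun i (x : GL (Fin n) E) => glCoordFun x i) p =
      fun x => glEval p x := fun p => by
    induction p using MvPolynomial.induction_on with
    | C a => funext x; simp [glEval]
    | add p q hp hq => simp [hp, hq, glEval]; rfl
    | mul_X p i hp => simp [hp, glEval]; rfl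
  simp [glPolyFun, key]

/-- The comultiplication of the coordinate ring of `GL n`: the coordinates of `x * y` as
polynomials in those of `x` (left summand) and of `y` (right summand). -/
def glMulSubst (n : ℕ) (E : Type*) [Field E] :
    (Fin n × Fin n) ⊕ Unit →
      MvPolynomial (((Fin n × Fin n) ⊕ Unit) ⊕ ((Fin n × Fin n) ⊕ Unit)) E
  | Sum.inl ij => ∑ k : Fin n, X (Sum.inl (Sum.inl (ij.1, k))) * X (Sum.inr (Sum.inl (k, ij.2)))
  | Sum.inr _ => X (Sum.inl (Sum.inr ())) * X (Sum.inr (Sum.inr ()))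

lemma glEval_mul (p : MvPolynomial ((Fin n × Fin n) ⊕ Unit) E) (x y : GL (Fin n) E) :
    glEval p (x * y) =
      eval (Sum.elim (glCoordFun x) (glCoordFun y)) (bind₁ (glMulSubst n E) p) := by
  have hbind : eval (Sum.elim (glCoordFun x) (glCoordFun y)) (bind₁ (glMulSubst n E) p) =
      eval (fun i => eval (Sum.elim (glCoordFun x) (glCoordFun y)) (glMulSubst n E i)) p :=
    eval₂Hom_bind₁ (RingHom.id E) _ _ p
  rw [hbind, glEval]
  refine congrArg (fun c => eval c p) (funext fun i => ?_)
  rcases i with ij | _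
  · simp [glMulSubst, glCoordFun, Matrix.mul_apply]
  · simp [glMulSubst, glCoordFun, Matrix.det_mul, Ring.mul_inverse_rev, mul_comm]

lemma exists_glEval_mul_eq_sum (p : MvPolynomial ((Fin n × Fin n) ⊕ Unit) E) :
    ∃ (s : Finset ((((Fin n × Fin n) ⊕ Unit) ⊕ ((Fin n × Fin n) ⊕ Unit)) →₀ ℕ))
      (a b : ((((Fin n × Fin n) ⊕ Unit) ⊕ ((Fin n × Fin n) ⊕ Unit)) →₀ ℕ) →
        MvPolynomial ((Fin n × Fin n) ⊕ Unit) E),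
      ∀ x y, glEval p (x * y) = ∑ m ∈ s, glEval (a m) x * glEval (b m) y := by
  set P := bind₁ (glMulSubst n E) p
  refine ⟨P.support, fun m => monomial (m.comapDomain Sum.inl Sum.inl_injective.injOn) (P.coeff m),
    fun m => monomial (m.comapDomain Sum.inr Sum.inr_injective.injOn) 1, fun x y => ?_⟩
  rw [glEval_mul]
  change eval _ P = _
  conv_lhs => rw [← P.support_sum_monomial_coeff, map_sum]
  refine Finset.sum_congr rfl fun m _ => ?_
  simp only [glEval, eval_monomial, Finsupp.prod_fintype _ _ (fun _ => pow_zero _),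
    Fintype.prod_sum_type, Finsupp.comapDomain_apply, Sum.elim_inl, Sum.elim_inr, one_mul]
  ring

lemma leftTranslate_mem_glPolyFun {F : GL (Fin n) E → E} (hF : F ∈ glPolyFun)
    (z : GL (Fin n) E) : (fun x => F (z * x)) ∈ glPolyFun := by
  obtain ⟨p, rfl⟩ := mem_glPolyFun_iff.1 hF
  obtain ⟨s, a, b, hab⟩ := exists_glEval_mul_eq_sum p
  refine mem_glPolyFun_iff.2 ⟨∑ m ∈ s, C (glEval (a m) z) * b m, funext fun x => ?_⟩
  beta_reduce
  rw [hab]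
  simp [glEval]

lemma rightTranslate_mem_glPolyFun {F : GL (Fin n) E → E} (hF : F ∈ glPolyFun)
    (h : GL (Fin n) E) : rightTranslate h F ∈ glPolyFun := by
  obtain ⟨p, rfl⟩ := mem_glPolyFun_iff.1 hF
  obtain ⟨s, a, b, hab⟩ := exists_glEval_mul_eq_sum p
  refine mem_glPolyFun_iff.2 ⟨∑ m ∈ s, C (glEval (b m) h) * a m, funext fun x => ?_⟩
  rw [rightTranslate_apply, hab]
  simp [glEval, mul_comm]

lemma rightTranslatesSpan_le_glPolyFun (H : Subgroup (GL (Fin n) E)) {F : GL (Fin n) E → E}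
    (hF : F ∈ glPolyFun) : rightTranslatesSpan H F ≤ Subalgebra.toSubmodule glPolyFun :=
  Submodule.span_le.2 fun _ ⟨h, hh⟩ => hh ▸ rightTranslate_mem_glPolyFun hF h

lemma finiteDimensional_rightTranslatesSpan (H : Subgroup (GL (Fin n) E)) {F : GL (Fin n) E → E}
    (hF : F ∈ glPolyFun) : FiniteDimensional E (rightTranslatesSpan H F) := by
  obtain ⟨p, rfl⟩ := mem_glPolyFun_iff.1 hF
  obtain ⟨s, a, b, hab⟩ := exists_glEval_mul_eq_sum p
  let S := Submodule.span E ((fun m x => glEval (a m) x) '' (s : Set _))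
  have : FiniteDimensional E S := FiniteDimensional.span_of_finite E (s.finite_toSet.image _)
  refine Submodule.finiteDimensional_of_le (Submodule.span_le.2 ?_ : _ ≤ S)
  rintro _ ⟨h, rfl⟩
  have : rightTranslate (h : GL (Fin n) E) (fun x => glEval p x) =
      ∑ m ∈ s, glEval (b m) h • fun x => glEval (a m) x := by
    ext x
    simp [hab, mul_comm]
  change rightTranslate (h : GL (Fin n) E) (fun x => glEval p x) ∈ S
  rw [this]
  exact Submodule.sum_mem _ fun m hm =>
    Submodule.smul_mem _ _ (Submodule.subset_span (Set.mem_image_of_mem _ hm))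

end PolynomialFunctions

theorem subgroup_local_eigenfunctions_general
    {E : Type*} [Field E] {n : ℕ}
    (G H : Subgroup (GL (Fin n) E))
    (hHG : H ≤ G)
    (ω : GL (Fin n) E → E) (hω : IsRatCharOn (H : Set (GL (Fin n) E)) ω)
    (g : GL (Fin n) E) (hg : g ∈ G) :
    ∃ U : Set (GL (Fin n) E), g ∈ U ∧ U ⊆ (G : Set (GL (Fin n) E)) ∧
      (∃ W, IsOpen W ∧ U = W ∩ (G : Set (GL (Fin n) E))) ∧
      (∀ x ∈ U, ∀ h ∈ H, x * h ∈ U) ∧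
      ∃ f : GL (Fin n) E → E, IsRegularOnGL U f ∧
        (∀ x ∈ U, ∀ h ∈ H, f (x * h) = ω h * f x) ∧ ∃ x ∈ U, f x ≠ 0 := by
  obtain ⟨⟨p₀, hp₀⟩, hω1, hωmul⟩ := hω
  have hF : (fun x => glEval p₀ x) ∈ glPolyFun := mem_glPolyFun_iff.2 ⟨p₀, rfl⟩
  have := finiteDimensional_rightTranslatesSpan H hF
  obtain ⟨P, hP, Q, hQ, hPg, hQg, hPQ⟩ := exists_translateDet_semiInvariant_pair glPolyFun
    (fun _ hF => leftTranslate_mem_glPolyFun hF) hω1 hωmul (fun y hy => (hp₀ y hy).symm)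
    (rightTranslatesSpan_le_glPolyFun H hF) g
  obtain ⟨p, rfl⟩ := mem_glPolyFun_iff.1 hP
  obtain ⟨q, rfl⟩ := mem_glPolyFun_iff.1 hQ
  refine ⟨{x | glEval q x ≠ 0} ∩ G, ⟨hQg, hg⟩, Set.inter_subset_right,
    ⟨_, TopologicalSpace.isOpen_generateFrom_of_mem ⟨q, rfl⟩, rfl⟩, ?_,
    fun x => glEval p x / glEval q x, fun _ hx => ⟨p, q, hx.1, fun y _ hy => div_mul_cancel₀ _ hy⟩,
    ?_, g, ⟨hQg, hg⟩, div_ne_zero hPg hQg⟩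
  · rintro x ⟨hx, hxG⟩ h hh
    obtain ⟨c, hc, hcx⟩ := hPQ h hh
    exact ⟨by simpa [(hcx x).1, hc] using hx, G.mul_mem hxG (hHG hh)⟩
  · rintro x ⟨hx, -⟩ h hh
    obtain ⟨c, hc, hcx⟩ := hPQ h hh
    simp only [(hcx x).1, (hcx x).2]
    field_simp

/-- For a closed subgroup `H` of a connected linear algebraic group
`G`, acting on `G` by right translations, every `g ∈ G` has an `H`-invariant open
neighbourhood `U` in `G` with `𝒪_ω(U) ≠ 0`, for every rational character `ω` of `H`. -/
theorem subgroup_local_eigenfunctions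
    {E : Type*} [Field E] [IsAlgClosed E] {n : ℕ}
    (G H : Subgroup (GL (Fin n) E)) (hG : IsConnectedLinearAlgGrp G)
    (hHG : H ≤ G) (hH : IsClosedSubgroup H)
    (ω : GL (Fin n) E → E) (hω : IsRatCharOn (H : Set (GL (Fin n) E)) ω)
    (g : GL (Fin n) E) (hg : g ∈ G) :
    ∃ U : Set (GL (Fin n) E), g ∈ U ∧ U ⊆ (G : Set (GL (Fin n) E)) ∧
      (∃ W, IsOpen W ∧ U = W ∩ (G : Set (GL (Fin n) E))) ∧
      (∀ x ∈ U, ∀ h ∈ H, x * h ∈ U) ∧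
      ∃ f : GL (Fin n) E → E, IsRegularOnGL U f ∧
        (∀ x ∈ U, ∀ h ∈ H, f (x * h) = ω h * f x) ∧ ∃ x ∈ U, f x ≠ 0 :=
  subgroup_local_eigenfunctions_general G H hHG ω hω g hg

end AlgGrp
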